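/- There exists a universal constant C > 0 such that the following holds. Let A be a random k×d complex matrix whose entries A_{i,j} are independent and identically distributed, each uniform on {1, −1, i, −i} ⊂ ℂ. Let x, w ∈ ℝ^d and define H_4 = ∑_{i=1}^k ∑_{(j_1,j_2)∈I'_{2,d}} Re( A_{i,j_1}² A_{i,j_2}² ) · ( w_{j_1}² x_{j_2}² + 2 x_{j_1} w_{j_1} x_{j_2} w_{j_2} ). Then for every t > 0: P[ |H_4| > t ] ≤ C · exp( −t² / (16 k ‖w‖₂⁴ ‖x‖₂⁴) ). -/

import Mathlib

/-!
Almost surely every entry satisfies `A i j ^ 2 = ±1`, so `Re (A i j₁ ^ 2 * A i j₂ ^ 2)` factors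
as `ε i j₁ * ε i j₂` with `ε i j = Re (A i j ^ 2)` independent centred signs. Hence `H₄` is the
sum over the rows `i` of independent centred chaoses `Y i = ∑_{j₁ ≠ j₂} ε i j₁ ε i j₂ c j₁ j₂`.
Expanding, `Y i = P Q + 2 S² - 3 T` with `P = ∑ ε w²`, `Q = ∑ ε x²`, `S = ∑ ε x w`, where
`|P| ≤ ‖w‖²`, `|Q| ≤ ‖x‖²` and `0 ≤ S² ≤ ‖x‖² ‖w‖²` (Cauchy–Schwarz), so `Y i` ranges in an
interval of length `4 ‖x‖² ‖w‖²`. Hoeffding's inequality then gives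
`P(|H₄| ≥ t) ≤ 2 exp (-t² / (8 k ‖x‖⁴ ‖w‖⁴))`, which is stronger than the claim with `C = 2`.
-/

open MeasureTheory ProbabilityTheory

/-- A complex random variable uniform on `{1, -1, i, -i}`. -/
def IsUniformFourth {Ω : Type*} [MeasurableSpace Ω] (μ : Measure Ω) (Z : Ω → ℂ) : Prop :=
  μ (Z ⁻¹' {1}) = 1 / 4 ∧ μ (Z ⁻¹' {-1}) = 1 / 4 ∧
    μ (Z ⁻¹' {Complex.I}) = 1 / 4 ∧ μ (Z ⁻¹' {-Complex.I}) = 1 / 4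

/-- The term `H₄`, a sum over pairs of distinct indices. -/
noncomputable def Hfour {Ω : Type*} {k d : ℕ} (A : Fin k → Fin d → Ω → ℂ)
    (x w : Fin d → ℝ) (ω : Ω) : ℝ :=
  ∑ i : Fin k, ∑ j₁ : Fin d, ∑ j₂ : Fin d,
    if j₁ ≠ j₂ then
      ((A i j₁ ω) ^ 2 * (A i j₂ ω) ^ 2).re *
        ((w j₁) ^ 2 * (x j₂) ^ 2 + 2 * x j₁ * w j₁ * x j₂ * w j₂)
    else 0

open Complex in
lemma Complex.sum_fourthRoots {M : Type*} [AddCommMonoid M] (f : ℂ → M) :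
    ∑ z ∈ ({1, -1, I, -I} : Finset ℂ), f z = f 1 + f (-1) + f I + f (-I) := by
  rw [Finset.sum_insert, Finset.sum_insert, Finset.sum_pair, add_assoc, add_assoc]
  all_goals simp [Complex.ext_iff]; try norm_num

namespace IsUniformFourth

open Complex

variable {Ω : Type*} [MeasurableSpace Ω] {μ : Measure Ω} {Z : Ω → ℂ}

lemma ae_mem [IsProbabilityMeasure μ] (hZ : Measurable Z) (h : IsUniformFourth μ Z) :
    ∀ᵐ ω ∂μ, Z ω ∈ ({1, -1, I, -I} : Finset ℂ) := by
  obtain ⟨h₁, h₂, h₃, h₄⟩ := h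
  have hS := hZ (Finset.measurableSet ({1, -1, I, -I} : Finset ℂ))
  refine (ae_mem_iff_measure_eq hS.nullMeasurableSet).2 ?_
  rw [measure_univ, ← sum_measure_preimage_singleton _ fun y _ ↦ hZ (measurableSet_singleton y),
    sum_fourthRoots, h₁, h₂, h₃, h₄, ← ENNReal.add_div, ← ENNReal.add_div, ← ENNReal.add_div]
  norm_num
  exact ENNReal.div_self (by norm_num) (by norm_num)

lemma integral_comp [IsProbabilityMeasure μ] (hZ : Measurable Z) (h : IsUniformFourth μ Z)
    {f : ℂ → ℝ} (hf : Measurable f) :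
    ∫ ω, f (Z ω) ∂μ = (f 1 + f (-1) + f I + f (-I)) / 4 := by
  have hmap : ∀ᵐ z ∂μ.map Z, z ∈ ({1, -1, I, -I} : Finset ℂ) :=
    (ae_map_iff (p := (· ∈ ({1, -1, I, -I} : Finset ℂ))) hZ.aemeasurable
      (Finset.measurableSet ({1, -1, I, -I} : Finset ℂ))).2 (h.ae_mem hZ)
  have hquarter : ∀ z, μ (Z ⁻¹' {z}) = 1 / 4 → (μ.map Z).real {z} = 1 / 4 := fun z hz ↦ by
    rw [map_measureReal_apply hZ (measurableSet_singleton z), measureReal_def, hz]; norm_num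
  obtain ⟨h₁, h₂, h₃, h₄⟩ := h
  rw [← integral_map hZ.aemeasurable hf.aestronglyMeasurable,
    ← Measure.restrict_eq_self_of_ae_mem hmap, setIntegral_finset _ IntegrableOn.finset,
    sum_fourthRoots, hquarter _ h₁, hquarter _ h₂, hquarter _ h₃, hquarter _ h₄]
  simp only [smul_eq_mul]; ring

lemma integral_re_sq [IsProbabilityMeasure μ] (hZ : Measurable Z) (h : IsUniformFourth μ Z) :
    ∫ ω, (Z ω ^ 2).re ∂μ = 0 := by
  rw [h.integral_comp hZ (f := fun z ↦ (z ^ 2).re) (by fun_prop)]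
  norm_num

lemma ae_sq_eq_one_or_neg_one [IsProbabilityMeasure μ] (hZ : Measurable Z)
    (h : IsUniformFourth μ Z) : ∀ᵐ ω ∂μ, Z ω ^ 2 = 1 ∨ Z ω ^ 2 = -1 := by
  filter_upwards [h.ae_mem hZ] with ω hω
  simp only [Finset.mem_insert, Finset.mem_singleton] at hω
  rcases hω with h | h | h | h <;> simp [h]

end IsUniformFourth

open Real
open scoped NNReal

section OffDiagonal

variable {ι : Type*} [Fintype ι] [DecidableEq ι]

def offDiagSum (c : ι → ι → ℝ) (e : ι → ℝ) : ℝ :=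
  ∑ j₁, ∑ j₂ ∈ Finset.univ.erase j₁, e j₁ * e j₂ * c j₁ j₂

lemma continuous_offDiagSum (c : ι → ι → ℝ) : Continuous (offDiagSum c) := by
  unfold offDiagSum; fun_prop

lemma offDiagSum_eq_sub (c : ι → ι → ℝ) (e : ι → ℝ) :
    offDiagSum c e = ∑ j₁, ∑ j₂, e j₁ * e j₂ * c j₁ j₂ - ∑ j, e j ^ 2 * c j j := by
  simp only [offDiagSum, Finset.sum_erase_eq_sub (Finset.mem_univ _), Finset.sum_sub_distrib, sq]

def hfourCoef (x w : ι → ℝ) (j₁ j₂ : ι) : ℝ :=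
  w j₁ ^ 2 * x j₂ ^ 2 + 2 * x j₁ * w j₁ * x j₂ * w j₂

lemma offDiagSum_hfourCoef {x w e : ι → ℝ} (he : ∀ j, e j ^ 2 = 1) :
    offDiagSum (hfourCoef x w) e = (∑ j, e j * w j ^ 2) * (∑ j, e j * x j ^ 2) +
      2 * (∑ j, e j * (x j * w j)) ^ 2 - 3 * ∑ j, x j ^ 2 * w j ^ 2 := by
  rw [offDiagSum_eq_sub, sq (∑ j, _), Finset.sum_mul_sum, Finset.sum_mul_sum, Finset.mul_sum,
    Finset.mul_sum, ← Finset.sum_add_distrib]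
  congr 1
  · refine Finset.sum_congr rfl fun j₁ _ ↦ ?_
    rw [Finset.mul_sum, ← Finset.sum_add_distrib]
    exact Finset.sum_congr rfl fun j₂ _ ↦ by simp only [hfourCoef]; ring
  · exact Finset.sum_congr rfl fun j _ ↦ by simp only [he, hfourCoef]; ring

lemma offDiagSum_hfourCoef_mem_Icc {x w e : ι → ℝ} (he : ∀ j, e j ^ 2 = 1) :
    offDiagSum (hfourCoef x w) e ∈ Set.Icc
      (-((∑ j, x j ^ 2) * ∑ j, w j ^ 2) - 3 * ∑ j, x j ^ 2 * w j ^ 2)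
      (3 * ((∑ j, x j ^ 2) * ∑ j, w j ^ 2) - 3 * ∑ j, x j ^ 2 * w j ^ 2) := by
  have habs : ∀ j, |e j| = 1 := fun j ↦ by rw [← Real.sqrt_sq_eq_abs, he, Real.sqrt_one]
  have hsigned : ∀ v : ι → ℝ, |∑ j, e j * v j ^ 2| ≤ ∑ j, v j ^ 2 := fun v ↦
    (Finset.abs_sum_le_sum_abs _ _).trans_eq <| Finset.sum_congr rfl fun j _ ↦ by
      rw [abs_mul, habs, one_mul, abs_sq]
  have hcs : (∑ j, e j * (x j * w j)) ^ 2 ≤ (∑ j, x j ^ 2) * ∑ j, w j ^ 2 := by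
    simpa only [mul_assoc, mul_pow, he, one_mul] using
      Finset.sum_mul_sq_le_sq_mul_sq Finset.univ (fun j ↦ e j * x j) w
  have hPQ := (abs_mul _ _).trans_le <|
    mul_le_mul (hsigned w) (hsigned x) (abs_nonneg _) (Finset.sum_nonneg fun j _ ↦ sq_nonneg (w j))
  rw [offDiagSum_hfourCoef he]
  constructor <;> nlinarith [abs_le.1 hPQ, sq_nonneg (∑ j, e j * (x j * w j))]

lemma Hfour_eq_sum_offDiagSum {Ω : Type*} {k d : ℕ} {A : Fin k → Fin d → Ω → ℂ} {ω : Ω}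
    (hA : ∀ i j, A i j ω ^ 2 = 1 ∨ A i j ω ^ 2 = -1) (x w : Fin d → ℝ) :
    Hfour A x w ω = ∑ i, offDiagSum (hfourCoef x w) fun j ↦ (A i j ω ^ 2).re := by
  refine Finset.sum_congr rfl fun i _ ↦ Finset.sum_congr rfl fun j₁ _ ↦ ?_
  rw [← Finset.filter_ne, Finset.sum_filter]
  refine Finset.sum_congr rfl fun j₂ _ ↦ ?_
  split_ifs
  · rcases hA i j₁ with h₁ | h₁ <;> rcases hA i j₂ with h₂ | h₂ <;> simp [h₁, h₂, hfourCoef]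
  · rfl

end OffDiagonal

section Independence

variable {Ω ι : Type*} [MeasurableSpace Ω] {μ : Measure Ω}

lemma ProbabilityTheory.iIndepFun.curry {κ β : Type*} [MeasurableSpace β] {X : ι → κ → Ω → β}
    (hX : ∀ i j, Measurable (X i j)) (h : iIndepFun (fun p : ι × κ ↦ X p.1 p.2) μ) :
    iIndepFun (fun i ω j ↦ X i j ω) μ := by
  have := h.isProbabilityMeasure
  have _ i j := Measure.isProbabilityMeasure_map (μ := μ) (hX i j).aemeasurable
  have hrow i : μ.map (fun ω j ↦ X i j ω) = Measure.infinitePi fun j ↦ μ.map (X i j) :=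
    (h.precomp (Prod.mk_right_injective i)).map_fun_eq_infinitePi_map (hX i)
  rw [iIndepFun_iff_map_fun_eq_infinitePi_map fun i ↦ measurable_pi_lambda _ (hX i)]
  simp_rw [hrow]
  rw [← Measure.infinitePi_map_curry,
    ← h.map_fun_eq_infinitePi_map (X := fun p : ι × κ ↦ X p.1 p.2) fun p ↦ hX p.1 p.2,
    Measure.map_map (by fun_prop) (measurable_pi_lambda _ fun p : ι × κ ↦ hX p.1 p.2)]
  rfl

lemma integral_offDiagSum_eq_zero [Fintype ι] [DecidableEq ι] {ε : ι → Ω → ℝ}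
    (hind : iIndepFun ε μ) (hint : ∀ j, Integrable (ε j) μ) (hmean : ∀ j, ∫ ω, ε j ω ∂μ = 0)
    (c : ι → ι → ℝ) :
    ∫ ω, offDiagSum c (fun j ↦ ε j ω) ∂μ = 0 := by
  have hpair {j₁ j₂ : ι} (hne : j₂ ≠ j₁) :
      Integrable (fun ω ↦ ε j₁ ω * ε j₂ ω * c j₁ j₂) μ ∧
        ∫ ω, ε j₁ ω * ε j₂ ω * c j₁ j₂ ∂μ = 0 := by
    have hindep := hind.indepFun hne.symm
    refine ⟨(hindep.integrable_mul (hint j₁) (hint j₂)).mul_const _, ?_⟩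
    rw [integral_mul_const, ← Pi.mul_def,
      hindep.integral_mul_eq_mul_integral (hint j₁).1 (hint j₂).1, hmean, zero_mul, zero_mul]
  unfold offDiagSum
  rw [integral_finsetSum _ fun j₁ _ ↦ integrable_finsetSum _ fun j₂ h₂ ↦
    (hpair (Finset.ne_of_mem_erase h₂)).1]
  refine Finset.sum_eq_zero fun j₁ _ ↦ ?_
  rw [integral_finsetSum _ fun j₂ h₂ ↦ (hpair (Finset.ne_of_mem_erase h₂)).1]
  exact Finset.sum_eq_zero fun j₂ h₂ ↦ (hpair (Finset.ne_of_mem_erase h₂)).2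

lemma measureReal_abs_sum_ge_le [Fintype ι] {Y : ι → Ω → ℝ} (hind : iIndepFun Y μ) {c : ℝ≥0}
    (hY : ∀ i, HasSubgaussianMGF (Y i) c μ) {t : ℝ} (ht : 0 ≤ t) :
    μ.real {ω | t ≤ |∑ i, Y i ω|} ≤ 2 * exp (-t ^ 2 / (2 * (Fintype.card ι * c))) := by
  have := hind.isProbabilityMeasure
  have hbound (Z : ι → Ω → ℝ) (hZ : iIndepFun Z μ) (hZc : ∀ i, HasSubgaussianMGF (Z i) c μ) :
      μ.real {ω | t ≤ ∑ i, Z i ω} ≤ exp (-t ^ 2 / (2 * (Fintype.card ι * c))) :=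
    (HasSubgaussianMGF.measure_sum_ge_le_of_iIndepFun hZ (s := Finset.univ)
      (fun i _ ↦ hZc i) ht).trans_eq (by simp)
  have hneg : iIndepFun (fun i ω ↦ -Y i ω) μ := hind.comp (fun _ ↦ Neg.neg) fun _ ↦ measurable_neg
  calc μ.real {ω | t ≤ |∑ i, Y i ω|}
      ≤ μ.real ({ω | t ≤ ∑ i, Y i ω} ∪ {ω | t ≤ ∑ i, -Y i ω}) := by
        refine measureReal_mono fun ω hω ↦ ?_
        simpa [Finset.sum_neg_distrib] using le_abs.1 hω
    _ ≤ _ := (measureReal_union_le _ _).trans <| by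
        rw [two_mul]
        exact add_le_add (hbound Y hind hY) (hbound _ hneg fun i ↦ (hY i).neg)

end Independence

theorem measureReal_abs_Hfour_ge_le {Ω : Type*} [MeasurableSpace Ω] {μ : Measure Ω}
    [IsProbabilityMeasure μ] {k d : ℕ} {A : Fin k → Fin d → Ω → ℂ}
    (hA : ∀ i j, Measurable (A i j)) (hunif : ∀ i j, IsUniformFourth μ (A i j))
    (hind : iIndepFun (fun p : Fin k × Fin d ↦ A p.1 p.2) μ) (x w : Fin d → ℝ) {t : ℝ}
    (ht : 0 ≤ t) :
    μ.real {ω | t ≤ |Hfour A x w ω|} ≤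
      2 * exp (-t ^ 2 / (8 * k * ((∑ j, x j ^ 2) * ∑ j, w j ^ 2) ^ 2)) := by
  set ε : Fin k → Fin d → Ω → ℝ := fun i j ω ↦ (A i j ω ^ 2).re
  set Y : Fin k → Ω → ℝ := fun i ω ↦ offDiagSum (hfourCoef x w) fun j ↦ ε i j ω
  have hε_meas i j : Measurable (ε i j) := Complex.measurable_re.comp ((hA i j).pow_const 2)
  have hgood : ∀ᵐ ω ∂μ, ∀ i j, A i j ω ^ 2 = 1 ∨ A i j ω ^ 2 = -1 := by
    simp only [ae_all_iff]
    exact fun i j ↦ (hunif i j).ae_sq_eq_one_or_neg_one (hA i j)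
  have hε_sq : ∀ᵐ ω ∂μ, ∀ i j, ε i j ω ^ 2 = 1 := hgood.mono fun ω hω i j ↦ by
    rcases hω i j with h | h <;> simp [ε, h]
  have hε_ind : iIndepFun (fun p : Fin k × Fin d ↦ ε p.1 p.2) μ :=
    hind.comp (fun _ z ↦ (z ^ 2).re) fun _ ↦ by fun_prop
  have hε_int i j : Integrable (ε i j) μ :=
    .of_bound (hε_meas i j).aestronglyMeasurable 1 <| hε_sq.mono fun ω hω ↦ by
      rw [Real.norm_eq_abs, ← sq_le_one_iff_abs_le_one, hω]
  have hY_ind : iIndepFun Y μ :=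
    (hε_ind.curry hε_meas).comp _ fun _ ↦ (continuous_offDiagSum _).measurable
  have hY_subG i := hasSubgaussianMGF_of_mem_Icc_of_integral_eq_zero
    ((continuous_offDiagSum _).measurable.comp (measurable_pi_lambda _ (hε_meas i))).aemeasurable
    (hε_sq.mono fun ω hω ↦ offDiagSum_hfourCoef_mem_Icc (x := x) (w := w) (hω i))
    (integral_offDiagSum_eq_zero (hε_ind.precomp (Prod.mk_right_injective i)) (hε_int i)
      (fun j ↦ (hunif i j).integral_re_sq (hA i j)) _)
  have hH : Hfour A x w =ᵐ[μ] fun ω ↦ ∑ i, Y i ω :=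
    hgood.mono fun ω hω ↦ Hfour_eq_sum_offDiagSum hω x w
  calc μ.real {ω | t ≤ |Hfour A x w ω|} = μ.real {ω | t ≤ |∑ i, Y i ω|} :=
        measureReal_congr (hH.fun_comp fun y ↦ t ≤ |y|)
    _ ≤ _ := measureReal_abs_sum_ge_le hY_ind hY_subG ht
    _ = _ := by
        simp only [Fintype.card_fin, coe_nnnorm, Real.norm_eq_abs, NNReal.coe_pow,
          NNReal.coe_div, NNReal.coe_ofNat, div_pow, sq_abs]
        ring_nf

/-- there is a universal constant `C > 0` such that for a random `k×d` matrix
with i.i.d. entries uniform on `{1, -1, i, -i}` and any nonzero `x, w ∈ ℝ^d`, for all `t > 0`,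
`P[|H₄| > t] ≤ C exp(-t²/(16 k ‖w‖₂⁴ ‖x‖₂⁴))`. -/
theorem stmt_9 :
    ∃ C : ℝ, 0 < C ∧
      ∀ (Ω : Type) (_ : MeasurableSpace Ω) (μ : Measure Ω), IsProbabilityMeasure μ →
      ∀ (k d : ℕ) (A : Fin k → Fin d → Ω → ℂ),
        (∀ i j, Measurable (A i j)) →
        (∀ i j, IsUniformFourth μ (A i j)) →
        iIndepFun (fun p : Fin k × Fin d => A p.1 p.2) μ →
      ∀ (x w : Fin d → ℝ), x ≠ 0 → w ≠ 0 →
      ∀ t : ℝ, 0 < t →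
        (μ {ω | t < |Hfour A x w ω|}).toReal ≤
          C * Real.exp (-(t ^ 2) /
            (16 * k * Real.sqrt (∑ j, (w j) ^ 2) ^ 4 * Real.sqrt (∑ j, (x j) ^ 2) ^ 4)) := by
  refine ⟨2, two_pos, fun Ω _ μ _ k d A hA hunif hind x w _ _ t ht ↦ ?_⟩
  have hexponent : -(t ^ 2) /
      (16 * k * Real.sqrt (∑ j, (w j) ^ 2) ^ 4 * Real.sqrt (∑ j, (x j) ^ 2) ^ 4) =
        -t ^ 2 / (8 * k * ((∑ j, x j ^ 2) * ∑ j, w j ^ 2) ^ 2) / 2 := by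
    simp only [show ∀ s : ℝ, √s ^ 4 = (√s ^ 2) ^ 2 from fun s ↦ by ring,
      Real.sq_sqrt (Finset.sum_nonneg fun j _ ↦ sq_nonneg (w j)),
      Real.sq_sqrt (Finset.sum_nonneg fun j _ ↦ sq_nonneg (x j))]
    ring
  have hneg : -t ^ 2 / (8 * k * ((∑ j, x j ^ 2) * ∑ j, w j ^ 2) ^ 2) ≤ 0 :=
    div_nonpos_of_nonpos_of_nonneg (neg_nonpos.2 (sq_nonneg t)) (by positivity)
  calc (μ {ω | t < |Hfour A x w ω|}).toReal ≤ μ.real {ω | t ≤ |Hfour A x w ω|} :=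
        measureReal_mono <| Set.ofPred_subset_ofPred.2 fun ω ↦ le_of_lt
    _ ≤ _ := measureReal_abs_Hfour_ge_le hA hunif hind x w ht.le
    _ ≤ _ := by
        rw [hexponent]
        exact mul_le_mul_of_nonneg_left (exp_le_exp.2 (by linarith)) two_pos.le
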